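/- arXiv:2202.01547 — 3 statements merged into one kernel-verified Lean document; each statement's English description precedes it below -/
import Mathlib

section
/- For all x, u ∈ ℝⁿ and all t > 0, the time derivative of the Mehler kernel satisfies ∂ₜKₜ(x,u) = Kₜ(x,u)·Nₜ(x,u), where Nₜ(x,u) = -(1/2)·tr(Qₜ⁻¹ e^{tB} Q e^{tB*}) + (1/2)·|Q^{1/2} e^{tB*} Qₜ⁻¹ (u - Dₜx)|² - ⟨Q_∞ B* Q_∞⁻¹ Dₜx , (Qₜ⁻¹ - Q_∞⁻¹)(u - Dₜx)⟩. -/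
noncomputable section
open MeasureTheory Matrix Real Set

namespace OUMult

variable {n : ℕ}

/-- Euclidean norm on `Fin n → ℝ`. -/
def enorm (x : Fin n → ℝ) : ℝ := Real.sqrt (∑ i, x i ^ 2)

/-- The matrix `Q_t = ∫₀ᵗ e^{sB} Q e^{sB*} ds`, defined entrywise. -/
def Qt (Q B : Matrix (Fin n) (Fin n) ℝ) (t : ℝ) : Matrix (Fin n) (Fin n) ℝ :=
  Matrix.of fun i j => ∫ s in Set.Ioc (0:ℝ) t,
    (NormedSpace.exp (s • B) * Q * NormedSpace.exp (s • Bᵀ)) i j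

/-- The matrix `Q_∞`. -/
def Qinf (Q B : Matrix (Fin n) (Fin n) ℝ) : Matrix (Fin n) (Fin n) ℝ :=
  Matrix.of fun i j => ∫ s in Set.Ioi (0:ℝ),
    (NormedSpace.exp (s • B) * Q * NormedSpace.exp (s • Bᵀ)) i j

/-- The quadratic form `R(x) = (1/2)⟨Q_∞⁻¹ x, x⟩`. -/
def Rq (Q B : Matrix (Fin n) (Fin n) ℝ) (x : Fin n → ℝ) : ℝ :=
  (1/2) * ((Qinf Q B)⁻¹.mulVec x ⬝ᵥ x)

/-- `D_t = Q_∞ e^{-tB*} Q_∞⁻¹`. -/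
def Dm (Q B : Matrix (Fin n) (Fin n) ℝ) (t : ℝ) : Matrix (Fin n) (Fin n) ℝ :=
  Qinf Q B * NormedSpace.exp ((-t) • Bᵀ) * (Qinf Q B)⁻¹

/-- The Mehler kernel. -/
def K (Q B : Matrix (Fin n) (Fin n) ℝ) (t : ℝ) (x u : Fin n → ℝ) : ℝ :=
  Real.sqrt ((Qinf Q B).det / (Qt Q B t).det) * Real.exp (Rq Q B x) *
    Real.exp (-(1/2) * (((Qt Q B t)⁻¹ - (Qinf Q B)⁻¹).mulVec (u - (Dm Q B t).mulVec x)
      ⬝ᵥ (u - (Dm Q B t).mulVec x)))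

/-- All eigenvalues of `B` have negative real part. -/
def NegSpec (B : Matrix (Fin n) (Fin n) ℝ) : Prop :=
  ∀ μ ∈ spectrum ℂ (B.map Complex.ofReal), μ.re < 0

/-- The invariant measure `γ_∞`. -/
def gamma (Q B : Matrix (Fin n) (Fin n) ℝ) : Measure (Fin n → ℝ) :=
  volume.withDensity fun x => ENNReal.ofReal
    ((2 * π) ^ (-(n:ℝ)/2) * (Qinf Q B).det ^ (-(1:ℝ)/2) * Real.exp (-(Rq Q B x)))

/-- `N_t(x,u) = ∂ₜKₜ(x,u)/Kₜ(x,u)`. -/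
def Nf (Q B : Matrix (Fin n) (Fin n) ℝ) (t : ℝ) (x u : Fin n → ℝ) : ℝ :=
  -(1/2) * Matrix.trace ((Qt Q B t)⁻¹ * (NormedSpace.exp (t • B) * Q * NormedSpace.exp (t • Bᵀ)))
  + (1/2) * (Q.mulVec ((NormedSpace.exp (t • Bᵀ)).mulVec ((Qt Q B t)⁻¹.mulVec (u - (Dm Q B t).mulVec x)))
      ⬝ᵥ (NormedSpace.exp (t • Bᵀ)).mulVec ((Qt Q B t)⁻¹.mulVec (u - (Dm Q B t).mulVec x)))
  - ((Qinf Q B * Bᵀ * (Qinf Q B)⁻¹).mulVec ((Dm Q B t).mulVec x)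
      ⬝ᵥ ((Qt Q B t)⁻¹ - (Qinf Q B)⁻¹).mulVec (u - (Dm Q B t).mulVec x))

end OUMult

/-!
Write `Kₜ(x,u) = √(det Q_∞ / det Qₜ) · e^{R(x)} · e^{-gₜ/2}` with
`gₜ = ⟨(Qₜ⁻¹ - Q_∞⁻¹) vₜ, vₜ⟩` and `vₜ = u - Dₜx`, so that `Nₜ` is the sum of the logarithmic
derivatives of the two factors depending on `t`. Since `Q̇ₜ = e^{tB} Q e^{tB*}`, Jacobi's formula
`(det Qₜ)˙ = det Qₜ · tr(Qₜ⁻¹ Q̇ₜ)` produces the trace term, and `(Qₜ⁻¹)˙ = -Qₜ⁻¹ Q̇ₜ Qₜ⁻¹`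
contributes `-|Q^{1/2} e^{tB*} Qₜ⁻¹ vₜ|²` to `ġₜ`. Finally `v̇ₜ = Q_∞ B* Q_∞⁻¹ Dₜ x`, and as
`Qₜ⁻¹ - Q_∞⁻¹` is symmetric the two terms of `ġₜ` containing `v̇ₜ` are equal; they give the cross
term.
-/

namespace Matrix

theorem det_updateRow_eq_sum {ι R : Type*} [Fintype ι] [DecidableEq ι] [CommRing R]
    (M : Matrix ι ι R) (j : ι) (v : ι → R) :
    (M.updateRow j v).det = ∑ i, v i * M.adjugate i j := by
  rw [← cramer_transpose_apply, cramer_eq_adjugate_mulVec, ← adjugate_transpose]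
  simp [mulVec, dotProduct, mul_comm]

theorem conj_mul_conj {ι R : Type*} [Fintype ι] [DecidableEq ι] [CommRing R]
    (P X Y : Matrix ι ι R) : P * X * P⁻¹ * (P * Y * P⁻¹) = P * (X * Y) * P⁻¹ := by
  by_cases h : IsUnit P.det
  · simp only [Matrix.mul_assoc, nonsing_inv_mul_cancel_left P _ h]
  · simp [nonsing_inv_apply_not_isUnit _ h]

theorem mulVec_dotProduct {ι R : Type*} [Fintype ι] [CommSemiring R] (A : Matrix ι ι R)
    (a b : ι → R) : A *ᵥ a ⬝ᵥ b = a ⬝ᵥ Aᵀ *ᵥ b := by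
  rw [dotProduct_mulVec, vecMul_transpose, dotProduct_comm]

theorem IsSymm.mul_transpose_mul_mul_mulVec_dotProduct {ι R : Type*} [Fintype ι]
    [CommSemiring R] {S : Matrix ι ι R} (hS : S.IsSymm) (P Q : Matrix ι ι R) (v : ι → R) :
    (S * (Pᵀ * Q * P) * S) *ᵥ v ⬝ᵥ v = Q *ᵥ (P *ᵥ (S *ᵥ v)) ⬝ᵥ P *ᵥ (S *ᵥ v) := by
  simp only [← mulVec_mulVec]
  rw [mulVec_dotProduct, hS.eq, mulVec_dotProduct, transpose_transpose]

theorem exp_smul_transpose {ι : Type*} [Fintype ι] [DecidableEq ι] (B : Matrix ι ι ℝ) (s : ℝ) :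
    NormedSpace.exp (s • Bᵀ) = (NormedSpace.exp (s • B))ᵀ := by
  rw [← exp_transpose, transpose_smul]

theorem isSymm_of_integral_apply {X ι : Type*} [MeasurableSpace X] (μ : Measure X)
    {F : X → Matrix ι ι ℝ} (hF : ∀ x, (F x).IsSymm) :
    (of fun i j => ∫ x, F x i j ∂μ).IsSymm :=
  IsSymm.ext fun i j => by simp only [of_apply, (hF _).apply]

theorem dotProduct_integral_mulVec {X ι : Type*} [MeasurableSpace X] [Fintype ι]
    {μ : Measure X} {F : X → Matrix ι ι ℝ} (hF : ∀ i j, Integrable (fun x => F x i j) μ)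
    (y : ι → ℝ) :
    y ⬝ᵥ (of fun i j => ∫ x, F x i j ∂μ) *ᵥ y = ∫ x, y ⬝ᵥ F x *ᵥ y ∂μ := by
  simp only [dotProduct, mulVec, of_apply, Finset.mul_sum]
  rw [integral_finsetSum _ fun i _ => integrable_finsetSum _ fun j _ =>
    ((hF i j).mul_const _).const_mul _]
  refine Finset.sum_congr rfl fun i _ => ?_
  rw [integral_finsetSum _ fun j _ => ((hF i j).mul_const _).const_mul _]
  refine Finset.sum_congr rfl fun j _ => ?_
  rw [integral_const_mul, integral_mul_const]

end Matrix

theorem HasDerivAt.sqrt_const_div {d : ℝ → ℝ} {τ t : ℝ} (a : ℝ) (hd : HasDerivAt d (d t * τ) t)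
    (hpos : 0 < d t) : HasDerivAt (fun s => √(a / d s)) (√(a / d t) * (-(1/2) * τ)) t := by
  have hsqrt := (hd.sqrt hpos.ne').inv (Real.sqrt_pos.2 hpos).ne'
  refine ((hsqrt.const_mul √a).congr_deriv ?_).congr_of_eventuallyEq ?_
  · rw [Real.sqrt_div' a hpos.le]
    field_simp
    rw [Real.sq_sqrt hpos.le]
    ring
  · filter_upwards [hd.continuousAt.eventually (lt_mem_nhds hpos)] with s hs
    rw [Real.sqrt_div' a hs.le, div_eq_mul_inv, Pi.inv_apply]

section MatrixCalculus

variable {𝕜 ι : Type*} [NontriviallyNormedField 𝕜] [Fintype ι] {t : 𝕜}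

theorem HasDerivAt.dotProduct {v w : 𝕜 → ι → 𝕜} {v' w' : ι → 𝕜} (hv : HasDerivAt v v' t)
    (hw : HasDerivAt w w' t) : HasDerivAt (fun s => v s ⬝ᵥ w s) (v' ⬝ᵥ w t + v t ⬝ᵥ w') t := by
  refine (HasDerivAt.fun_sum fun i (_ : i ∈ Finset.univ) =>
    (hasDerivAt_pi.1 hv i).mul (hasDerivAt_pi.1 hw i)).congr_deriv ?_
  simp only [Finset.sum_add_distrib]
  rfl

variable (𝕜 ι) in
def detRowContinuous [DecidableEq ι] : ContinuousMultilinearMap 𝕜 (fun _ : ι => ι → 𝕜) 𝕜 :=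
  { (detRowAlternating : (ι → 𝕜) [⋀^ι]→ₗ[𝕜] 𝕜).toMultilinearMap with
    cont := continuous_id.matrix_det }

-- Any norm making matrices a normed algebra will do: `hasDerivAt_matrix_iff` shows that
-- differentiability does not depend on it.
attribute [local instance] Matrix.linftyOpNormedAddCommGroup Matrix.linftyOpNormedSpace
  Matrix.linftyOpNormedRing Matrix.linftyOpNormedAlgebra

variable [CompleteSpace 𝕜] [DecidableEq ι] {A M : 𝕜 → Matrix ι ι 𝕜} {A' M' : Matrix ι ι 𝕜}

theorem hasDerivAt_matrix_iff :
    HasDerivAt A A' t ↔ ∀ i j, HasDerivAt (fun s => A s i j) (A' i j) t := by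
  refine ⟨fun h i j => ?_, fun h => ?_⟩
  · exact (LinearMap.toContinuousLinearMap (entryLinearMap 𝕜 𝕜 i j)).hasFDerivAt.comp_hasDerivAt
      t h
  · have hsum : ∀ N : Matrix ι ι 𝕜, N = ∑ i, ∑ j, N i j • single i j (1 : 𝕜) := fun N => by
      simpa [smul_single] using N.matrix_eq_sum_single
    rw [hsum A', funext fun s => hsum (A s)]
    exact HasDerivAt.fun_sum fun i _ => HasDerivAt.fun_sum fun j _ => (h i j).smul_const _

theorem HasDerivAt.matrix_det (hA : HasDerivAt A A' t) :
    HasDerivAt (fun s => (A s).det) (trace (adjugate (A t) * A')) t := by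
  have hrows : HasDerivAt (F := ι → ι → 𝕜) A A' t :=
    hasDerivAt_pi.2 fun i => hasDerivAt_pi.2 fun j => hasDerivAt_matrix_iff.1 hA i j
  refine (((detRowContinuous 𝕜 ι).hasFDerivAt (A t)).comp_hasDerivAt t hrows).congr_deriv ?_
  erw [ContinuousMultilinearMap.linearDeriv_apply]
  change ∑ j, ((A t).updateRow j (A' j)).det = _
  simp only [det_updateRow_eq_sum, trace, diag, mul_apply]
  rw [Finset.sum_comm]
  simp [mul_comm]

theorem HasDerivAt.matrix_inv (hA : HasDerivAt A A' t) (hunit : IsUnit (A t)) :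
    HasDerivAt (fun s => (A s)⁻¹) (-((A t)⁻¹ * A' * (A t)⁻¹)) t := by
  -- for the uniformity of the normed ring, not the product uniformity that matrices carry globally
  have : @CompleteSpace (Matrix ι ι 𝕜) Matrix.linftyOpNormedRing.toUniformSpace :=
    FiniteDimensional.complete 𝕜 _
  obtain ⟨U, hU⟩ := hunit
  have h := hasFDerivAt_ringInverse (𝕜 := 𝕜) U
  rw [hU] at h
  refine ((h.comp_hasDerivAt t hA).congr_deriv ?_).congr_of_eventuallyEq ?_
  · simp [← hU, Matrix.coe_units_inv]
  · exact Filter.Eventually.of_forall fun s => nonsing_inv_eq_ringInverse (A s)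

theorem HasDerivAt.matrix_mulVec {v : 𝕜 → ι → 𝕜} {v' : ι → 𝕜} (hM : HasDerivAt M M' t)
    (hv : HasDerivAt v v' t) : HasDerivAt (fun s => M s *ᵥ v s) (M' *ᵥ v t + M t *ᵥ v') t :=
  hasDerivAt_pi.2 fun i => (hasDerivAt_pi.2 (hasDerivAt_matrix_iff.1 hM i)).dotProduct hv

end MatrixCalculus

namespace OUMult

variable {n : ℕ}

section

attribute [local instance] Matrix.linftyOpNormedAddCommGroup Matrix.linftyOpNormedSpace
  Matrix.linftyOpNormedRing Matrix.linftyOpNormedAlgebra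

variable {Q B : Matrix (Fin n) (Fin n) ℝ}

def expConj (Q B : Matrix (Fin n) (Fin n) ℝ) (s : ℝ) : Matrix (Fin n) (Fin n) ℝ :=
  NormedSpace.exp (s • B) * Q * NormedSpace.exp (s • Bᵀ)

theorem expConj_eq_transpose_mul_mul (s : ℝ) :
    expConj Q B s = (NormedSpace.exp (s • Bᵀ))ᵀ * Q * NormedSpace.exp (s • Bᵀ) := by
  rw [expConj, exp_smul_transpose, transpose_transpose]

theorem expConj_isSymm (hQ : Q.IsSymm) (s : ℝ) : (expConj Q B s).IsSymm := by
  rw [expConj_eq_transpose_mul_mul, IsSymm, transpose_mul, transpose_mul, hQ.eq,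
    transpose_transpose, Matrix.mul_assoc]

theorem expConj_posDef (hQ : Q.PosDef) (s : ℝ) : (expConj Q B s).PosDef := by
  rw [expConj_eq_transpose_mul_mul, ← conjTranspose_eq_transpose_of_trivial]
  exact hQ.conjTranspose_mul_mul_same (mulVec_injective_of_isUnit (isUnit_exp _))

theorem differentiable_expConj : Differentiable ℝ (expConj Q B) := fun s =>
  (((hasDerivAt_exp_smul_const' B s).mul_const Q).mul
    (hasDerivAt_exp_smul_const' Bᵀ s)).differentiableAt

theorem continuous_expConj : Continuous (expConj Q B) :=
  continuous_pi fun i => continuous_pi fun j => continuous_iff_continuousAt.2 fun s =>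
    (hasDerivAt_matrix_iff.1 (differentiable_expConj s).hasDerivAt i j).continuousAt

theorem Qt_eq (t : ℝ) : Qt Q B t = of fun i j => ∫ s in Ioc 0 t, expConj Q B s i j := rfl

theorem hasDerivAt_Qt {t : ℝ} (ht : 0 < t) : HasDerivAt (Qt Q B) (expConj Q B t) t := by
  refine hasDerivAt_matrix_iff.2 fun i j => ?_
  refine ((continuous_expConj.matrix_elem i j).integral_hasStrictDerivAt 0 t).hasDerivAt
    |>.congr_of_eventuallyEq ?_
  filter_upwards [Ioi_mem_nhds ht] with s hs
  rw [Qt_eq, of_apply, intervalIntegral.integral_of_le hs.le]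

theorem Qt_isSymm (hQ : Q.IsSymm) (t : ℝ) : (Qt Q B t).IsSymm :=
  isSymm_of_integral_apply _ (expConj_isSymm hQ)

theorem Qinf_isSymm (hQ : Q.IsSymm) : (Qinf Q B).IsSymm :=
  isSymm_of_integral_apply _ (expConj_isSymm hQ)

theorem Qt_posDef (hQ : Q.PosDef) {t : ℝ} (ht : 0 < t) : (Qt Q B t).PosDef := by
  have hQsymm : Q.IsSymm := isHermitian_iff_isSymm.1 hQ.1
  refine .of_dotProduct_mulVec_pos (isHermitian_iff_isSymm.2 (Qt_isSymm hQsymm t)) fun y hy => ?_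
  rw [star_trivial, Qt_eq, dotProduct_integral_mulVec
    (fun i j => (continuous_expConj.matrix_elem i j).integrableOn_Ioc),
    ← intervalIntegral.integral_of_le ht.le]
  refine intervalIntegral.intervalIntegral_pos_of_pos_on ?_ (fun s _ => ?_) ht
  · exact (continuous_const.dotProduct
      (continuous_expConj.matrix_mulVec continuous_const)).intervalIntegrable _ _
  · exact (expConj_posDef hQ s).dotProduct_mulVec_pos hy

theorem hasDerivAt_det_Qt (hQ : Q.PosDef) {t : ℝ} (ht : 0 < t) :
    HasDerivAt (fun s => (Qt Q B s).det)
      ((Qt Q B t).det * trace ((Qt Q B t)⁻¹ * expConj Q B t)) t := by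
  have hdet : IsUnit (Qt Q B t).det := (isUnit_iff_isUnit_det _).1 (Qt_posDef hQ ht).isUnit
  refine (hasDerivAt_Qt ht).matrix_det.congr_deriv ?_
  rw [inv_def, Matrix.smul_mul, trace_smul, smul_eq_mul, ← mul_assoc,
    Ring.mul_inverse_cancel _ hdet, one_mul]

theorem hasDerivAt_Dm (t : ℝ) :
    HasDerivAt (Dm Q B) (-(Qinf Q B * Bᵀ * (Qinf Q B)⁻¹ * Dm Q B t)) t := by
  have hexp := (hasDerivAt_exp_smul_const' Bᵀ (-t)).scomp t (hasDerivAt_neg t)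
  refine ((hexp.const_mul (Qinf Q B)).mul_const (Qinf Q B)⁻¹).congr_deriv ?_
  rw [Dm, conj_mul_conj, neg_smul, one_smul]
  simp only [Matrix.mul_neg, Matrix.neg_mul, Matrix.mul_assoc]
  rfl

def mehlerExponent (Q B : Matrix (Fin n) (Fin n) ℝ) (t : ℝ) (x u : Fin n → ℝ) : ℝ :=
  ((Qt Q B t)⁻¹ - (Qinf Q B)⁻¹) *ᵥ (u - Dm Q B t *ᵥ x) ⬝ᵥ (u - Dm Q B t *ᵥ x)

theorem hasDerivAt_mehlerExponent (hQ : Q.PosDef) {t : ℝ} (ht : 0 < t) (x u : Fin n → ℝ) :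
    HasDerivAt (fun s => mehlerExponent Q B s x u)
      (-(Q *ᵥ (NormedSpace.exp (t • Bᵀ) *ᵥ ((Qt Q B t)⁻¹ *ᵥ (u - Dm Q B t *ᵥ x)))
          ⬝ᵥ NormedSpace.exp (t • Bᵀ) *ᵥ ((Qt Q B t)⁻¹ *ᵥ (u - Dm Q B t *ᵥ x)))
        + 2 * ((Qinf Q B * Bᵀ * (Qinf Q B)⁻¹) *ᵥ (Dm Q B t *ᵥ x)
          ⬝ᵥ ((Qt Q B t)⁻¹ - (Qinf Q B)⁻¹) *ᵥ (u - Dm Q B t *ᵥ x))) t := by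
  have hQsymm : Q.IsSymm := isHermitian_iff_isSymm.1 hQ.1
  have hM : HasDerivAt (fun s => (Qt Q B s)⁻¹ - (Qinf Q B)⁻¹)
      (-((Qt Q B t)⁻¹ * expConj Q B t * (Qt Q B t)⁻¹)) t :=
    ((hasDerivAt_Qt ht).matrix_inv (Qt_posDef hQ ht).isUnit).sub_const _
  have hv := ((hasDerivAt_Dm (Q := Q) (B := B) t).matrix_mulVec (hasDerivAt_const t x)).const_sub u
  have hMsymm : ((Qt Q B t)⁻¹ - (Qinf Q B)⁻¹).IsSymm :=
    (Qt_isSymm hQsymm t).inv.sub (Qinf_isSymm hQsymm).inv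
  refine ((hM.matrix_mulVec hv).dotProduct hv).congr_deriv ?_
  rw [expConj_eq_transpose_mul_mul]
  simp only [mulVec_zero, add_zero, neg_mulVec, neg_neg, add_dotProduct, neg_dotProduct,
    (Qt_isSymm hQsymm t).inv.mul_transpose_mul_mul_mulVec_dotProduct]
  rw [← mulVec_mulVec x, mulVec_dotProduct ((Qt Q B t)⁻¹ - (Qinf Q B)⁻¹), hMsymm.eq,
    dotProduct_comm (((Qt Q B t)⁻¹ - (Qinf Q B)⁻¹) *ᵥ _)]
  ring

theorem K_eq (t : ℝ) (x u : Fin n → ℝ) : K Q B t x u =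
    √((Qinf Q B).det / (Qt Q B t).det) * Real.exp (Rq Q B x)
      * Real.exp (-(1/2) * mehlerExponent Q B t x u) := rfl

end

-- In `Nf`, `|Q^{1/2} w|²` is written `⟨Q w, w⟩`, where `w = e^{tB*} Qₜ⁻¹ (u - Dₜx)`.
theorem mehler_deriv_eq_mul_general
    (Q B : Matrix (Fin n) (Fin n) ℝ)
    (hQ : Q.PosDef)
    (x u : Fin n → ℝ) (t : ℝ) (ht : 0 < t) :
    HasDerivAt (fun s => K Q B s x u) (K Q B t x u * Nf Q B t x u) t := by
  have hprefactor := ((hasDerivAt_det_Qt (B := B) hQ ht).sqrt_const_div (Qinf Q B).det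
    (Qt_posDef hQ ht).det_pos).mul_const (Real.exp (Rq Q B x))
  have hgauss := ((hasDerivAt_mehlerExponent (B := B) hQ ht x u).const_mul (-(1/2))).exp
  refine (hprefactor.mul hgauss).congr_deriv ?_
  rw [K_eq, Nf, expConj]
  ring

/-- Lemma: `∂ₜKₜ(x,u) = Kₜ(x,u)·Nₜ(x,u)`.
For all `x, u ∈ ℝⁿ` and all `t > 0`, the time derivative of the Mehler kernel equals
`Kₜ(x,u) · Nₜ(x,u)`, where `Nₜ` is as in `Nf` (note that
`(1/2)·|Q^{1/2} e^{tB*} Qₜ⁻¹ (u - Dₜx)|² = (1/2)·⟨Q w, w⟩` with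
`w = e^{tB*} Qₜ⁻¹ (u - Dₜx)`, since `Q^{1/2}` is symmetric). -/
theorem mehler_deriv_eq_mul
    (hn : 0 < n) (Q B : Matrix (Fin n) (Fin n) ℝ)
    (hQ : Q.PosDef) (hQsymm : Q.IsSymm) (hB : NegSpec B)
    (x u : Fin n → ℝ) (t : ℝ) (ht : 0 < t) :
    HasDerivAt (fun s => K Q B s x u) (K Q B t x u * Nf Q B t x u) t :=
  mehler_deriv_eq_mul_general Q B hQ x u t ht

end OUMult
end
end

section
/- If x, u ∈ ℝⁿ satisfy |x - u| ≤ (1/3)·1/(1 + |x|), then for every j ≥ 0 the implication ( r_j(u) > 0 ⟹ r̃_j(x) = 1 ) holds, and consequently η(x,u) = 1. -/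
noncomputable section
open Set

namespace OUMult

variable {n : ℕ}

/-- Open Euclidean ball in `ℝⁿ`. -/
def ball (c : Fin n → ℝ) (r : ℝ) : Set (Fin n → ℝ) := {y | enorm (y - c) < r}

/-- The localizing function `η(x,u) = Σ_j r̃_j(x) r_j(u)`. -/
def eta (rt r : ℕ → (Fin n → ℝ) → ℝ) (x u : Fin n → ℝ) : ℝ := ∑' j, rt j x * r j u

/-- The hypotheses on the covering balls `B_j = B(x_j, 1/(1+|x_j|))` and on the
partition functions `r_j` (subordinate to `4B_j`, summing to `1`) and the enlarged
cutoffs `r̃_j` (equal to `1` on `5B_j`, supported in `6B_j`), with gradient bounds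
`|∇r_j|, |∇r̃_j| ≤ C₀(1+|x|)`. -/
structure EtaSetup (n : ℕ) (xs : ℕ → (Fin n → ℝ)) (r rt : ℕ → (Fin n → ℝ) → ℝ)
    (C₀ : ℝ) : Prop where
  x0 : xs 0 = 0
  disj : Pairwise fun i j =>
    Disjoint (ball (xs i) (1 / (1 + enorm (xs i)))) (ball (xs j) (1 / (1 + enorm (xs j))))
  max : ∀ y : Fin n → ℝ, ∃ j,
    ¬ Disjoint (ball y (1 / (1 + enorm y))) (ball (xs j) (1 / (1 + enorm (xs j))))
  C₀pos : 0 < C₀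
  r_smooth : ∀ j, ContDiff ℝ (⊤ : ℕ∞) (r j)
  r_range : ∀ j x, r j x ∈ Set.Icc (0:ℝ) 1
  r_supp : ∀ j, Function.support (r j) ⊆ ball (xs j) (4 * (1 / (1 + enorm (xs j))))
  r_sum : ∀ x, HasSum (fun j => r j x) 1
  r_grad : ∀ j x, ‖fderiv ℝ (r j) x‖ ≤ C₀ * (1 + enorm x)
  rt_smooth : ∀ j, ContDiff ℝ (⊤ : ℕ∞) (rt j)
  rt_range : ∀ j x, rt j x ∈ Set.Icc (0:ℝ) 1
  rt_one : ∀ j x, x ∈ ball (xs j) (5 * (1 / (1 + enorm (xs j)))) → rt j x = 1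
  rt_supp : ∀ j, Function.support (rt j) ⊆ ball (xs j) (6 * (1 / (1 + enorm (xs j))))
  rt_grad : ∀ j x, ‖fderiv ℝ (rt j) x‖ ≤ C₀ * (1 + enorm x)


lemma enorm_eq_norm {n : ℕ} (x : Fin n → ℝ) :
    enorm x = ‖(WithLp.equiv 2 (Fin n → ℝ)).symm x‖ := by
  rw [EuclideanSpace.norm_eq]
  simp [enorm, Real.norm_eq_abs, sq_abs]

lemma enorm_nonneg {n : ℕ} (x : Fin n → ℝ) : 0 ≤ enorm x :=
  Real.sqrt_nonneg _

lemma enorm_sub_le {n : ℕ} (x y z : Fin n → ℝ) :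
    enorm (x - z) ≤ enorm (x - y) + enorm (y - z) := by
  simp only [enorm_eq_norm, WithLp.equiv_symm_apply, WithLp.toLp_sub]
  exact norm_sub_le_norm_sub_add_norm_sub _ _ _

lemma enorm_le_add {n : ℕ} (x y : Fin n → ℝ) :
    enorm x ≤ enorm y + enorm (x - y) := by
  simp only [enorm_eq_norm, WithLp.equiv_symm_apply, WithLp.toLp_sub]
  exact norm_le_norm_add_norm_sub' _ _

/-- Lemma: `η = 1` for nearby points.
If `|x - u| ≤ (1/3)·1/(1 + |x|)`, then for every `j` the implication
`r_j(u) > 0 ⟹ r̃_j(x) = 1` holds, and consequently `η(x,u) = 1`. -/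
theorem eta_eq_one_of_close
    (hn : 0 < n) (xs : ℕ → (Fin n → ℝ)) (r rt : ℕ → (Fin n → ℝ) → ℝ) (C₀ : ℝ)
    (hsetup : EtaSetup n xs r rt C₀)
    (x u : Fin n → ℝ) (hxu : enorm (x - u) ≤ (1/3) * (1 / (1 + enorm x))) :
    (∀ j : ℕ, 0 < r j u → rt j x = 1) ∧ eta rt r x u = 1 := by
  have key : ∀ j : ℕ, 0 < r j u → rt j x = 1 := by
    intro j hrj
    have hu : u ∈ ball (xs j) (4 * (1 / (1 + enorm (xs j)))) :=
      hsetup.r_supp j (by simp [Function.mem_support]; positivity)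
    set s := 1 + enorm x with hs
    set t := 1 + enorm (xs j) with ht
    have hs1 : 1 ≤ s := by simpa [hs] using enorm_nonneg x
    have ht1 : 1 ≤ t := by simpa [ht] using enorm_nonneg (xs j)
    have hs0 : 0 < s := by linarith
    have ht0 : 0 < t := by linarith
    have hu' : enorm (u - xs j) < 4 * (1 / t) := hu
    have htri : enorm (x - xs j) ≤ enorm (x - u) + enorm (u - xs j) :=
      enorm_sub_le x u (xs j)
    have hxj : enorm (x - xs j) ≤ (1/3) * (1/s) + 4 * (1/t) := by
      linarith
    have hts : t < 3 * s := by
      by_contra h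
      push_neg at h
      have h2 : t ≤ s + ((1/3) * (1/s) + 4 * (1/t)) := by
        have h0 := enorm_le_add (xs j) x
        have hcomm : enorm (xs j - x) = enorm (x - xs j) := by
          simp only [enorm_eq_norm, WithLp.equiv_symm_apply, WithLp.toLp_sub]
          rw [norm_sub_rev]
        rw [hcomm] at h0
        linarith
      have ht3 : (3:ℝ) ≤ t := by linarith
      have h2' := mul_le_mul_of_nonneg_right h2 (by positivity : (0:ℝ) ≤ 3 * s * t)
      have hexp : (s + ((1/3) * (1/s) + 4 * (1/t))) * (3 * s * t)
          = 3 * s^2 * t + t + 12 * s := by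
        field_simp
        ring
      rw [hexp] at h2'
      nlinarith [mul_le_mul_of_nonneg_right h (mul_pos hs0 ht0).le,
        mul_le_mul_of_nonneg_right ht3 (mul_pos hs0 ht0).le,
        mul_le_mul_of_nonneg_right hs1 ht0.le, mul_pos hs0 ht0]
    have hfin : enorm (x - xs j) < 5 * (1 / t) := by
      have h1 : (1/3) * (1/s) < 1/t := by
        have e1 : (1:ℝ)/3 * (1/s) = 1/(3*s) := by
          field_simp
        rw [e1]
        exact one_div_lt_one_div_of_lt ht0 hts
      linarith
    exact hsetup.rt_one j x hfin
  refine ⟨key, ?_⟩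
  have heq : (fun j => rt j x * r j u) = fun j => r j u := by
    funext j
    rcases eq_or_lt_of_le (hsetup.r_range j u).1 with h | h
    · rw [← h, mul_zero]
    · rw [key j h, one_mul]
  rw [eta, heq]
  exact (hsetup.r_sum u).tsum_eq


end OUMult
end
end

section
/- Let λ ∈ ℝ and μ > 0, and let J ⊂ ℝ be a closed interval of length strictly less than 1/μ. Let φ ∈ C²(J) be real-valued and set S_{λ,μ}φ = φ'' - 2λφ' + (λ² + μ²)φ. If S_{λ,μ}φ does not vanish in the interior of J, then φ has at most two zeros in J. More generally, if S_{λ,μ}φ has at most k zeros in J, then φ has at most 2k + 2 zeros in J. The same two statements hold with S_{λ,μ}φ replaced by T_λφ = φ' - λφ. -/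
/-!
With `ψ = e^{-λt} φ` one has `e^{-λt} (φ' - λφ) = ψ'` and
`e^{-λt} (φ'' - 2λφ' + (λ² + μ²)φ) = ψ'' + μ²ψ`, so by Rolle `φ' - λφ` vanishes strictly between
any two zeros of `φ`. For the second-order operator, compare `ψ` with `sin (μ (t - p))` through
`W_p = ψ' sin (μ (t - p)) - μ ψ cos (μ (t - p))` (`sinWronskian ψ ψ' μ p`), whose derivative is
`(ψ'' + μ²ψ) sin (μ (t - p))`. If `ψ'' + μ²ψ > 0` on an interval of length `≤ π / μ` containing
zeros `c < m < e` of `ψ`, then `W_c` increases on `[c, m]`, forcing `ψ' m > 0`, while `W_e`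
decreases on `[m, e]`, forcing `ψ' m < 0`. By Darboux's theorem a nonvanishing `ψ'' + μ²ψ` has
constant sign, so `φ'' - 2λφ' + (λ² + μ²)φ` vanishes strictly between any three zeros of `φ`.

Counting: if any `m + 1` zeros of `φ` enclose a zero of `F` and `F` has at most `k` zeros, then
zeros of `φ` with the same number of zeros of `F` to their left come at most `m` at a time, so
there are at most `m (k + 1)` of them.
-/

noncomputable section
open Set Real

theorem Set.encard_le_of_forall_not_strictMono {α : Type*} [LinearOrder α] {T : Set α} {m : ℕ}
    (h : ∀ t : Fin (m + 1) → α, StrictMono t → ¬ ∀ i, t i ∈ T) : T.encard ≤ m := by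
  by_contra! hlt
  obtain ⟨F, hFT, hF⟩ := exists_subset_encard_eq (Order.add_one_le_of_lt hlt)
  have hFfin : F.Finite := finite_of_encard_eq_coe hF
  have hcard : hFfin.toFinset.card = m + 1 := by
    rw [hFfin.encard_eq_coe_toFinset_card] at hF
    exact_mod_cast hF
  exact h _ (hFfin.toFinset.orderEmbOfFin hcard).strictMono
    fun i => hFT (hFfin.mem_toFinset.mp (hFfin.toFinset.orderEmbOfFin_mem hcard i))

theorem Set.encard_le_mul_of_forall_exists_mem_Ioo {α : Type*} [LinearOrder α] {S Z : Set α}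
    {m k : ℕ} (hZ : Z.encard ≤ k)
    (hsep : ∀ t : Fin (m + 1) → α, StrictMono t → (∀ i, t i ∈ S) →
      ∃ z ∈ Z, z ∈ Ioo (t 0) (t (Fin.last m))) :
    S.encard ≤ (m * (k + 1) : ℕ) := by
  have hZfin : Z.Finite := finite_of_encard_le_coe hZ
  let fiber (j : ℕ) : Set α := {s ∈ S | (Z ∩ Iio s).ncard = j}
  have hcover : S ⊆ ⋃ j ∈ Finset.range (k + 1), fiber j := by
    intro s hs
    have : (Z ∩ Iio s).ncard ≤ k :=
      (ncard_le_ncard inter_subset_left hZfin).trans ((encard_le_coe_iff_finite_ncard_le.mp hZ).2)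
    exact mem_biUnion (Finset.mem_range.mpr (Nat.lt_succ_of_le this)) ⟨hs, rfl⟩
  have hfiber (j : ℕ) : (fiber j).encard ≤ m := by
    refine encard_le_of_forall_not_strictMono fun t ht htS => ?_
    obtain ⟨z, hzZ, hz⟩ := hsep t ht fun i => (htS i).1
    have hsub : Z ∩ Iio (t 0) ⊆ Z ∩ Iio (t (Fin.last m)) :=
      inter_subset_inter_right Z (Iio_subset_Iio (ht.monotone (Fin.zero_le _)))
    have heq := eq_of_subset_of_ncard_le hsub (((htS _).2).trans (htS 0).2.symm).le
      (hZfin.subset inter_subset_left)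
    have : z ∈ Z ∩ Iio (t 0) := heq ▸ ⟨hzZ, hz.2⟩
    exact lt_asymm hz.1 this.2
  calc S.encard ≤ ∑ j ∈ Finset.range (k + 1), (fiber j).encard :=
        (encard_le_encard hcover).trans (Finset.set_encard_biUnion_le _ _)
    _ ≤ ∑ j ∈ Finset.range (k + 1), (m : ℕ∞) := Finset.sum_le_sum fun j _ => hfiber j
    _ = (m * (k + 1) : ℕ) := by simp [mul_comm]

def sinWronskian (ψ ψ' : ℝ → ℝ) (μ p x : ℝ) : ℝ :=
  ψ' x * sin (μ * (x - p)) - μ * (ψ x * cos (μ * (x - p)))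

section Sturm

variable {ψ ψ' ψ'' : ℝ → ℝ} {μ : ℝ}

theorem hasDerivAt_sinWronskian {p t : ℝ} (hd : HasDerivAt ψ (ψ' t) t)
    (hd' : HasDerivAt ψ' (ψ'' t) t) :
    HasDerivAt (sinWronskian ψ ψ' μ p) ((ψ'' t + μ ^ 2 * ψ t) * sin (μ * (t - p))) t := by
  have hlin : HasDerivAt (fun x => μ * (x - p)) μ t := by
    simpa using ((hasDerivAt_id t).sub_const p).const_mul μ
  exact ((hd'.mul hlin.sin).sub ((hd.mul hlin.cos).const_mul μ)).congr_deriv (by ring)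

theorem continuousOn_sinWronskian {s : Set ℝ} (p : ℝ) (hψ : ContinuousOn ψ s)
    (hψ' : ContinuousOn ψ' s) : ContinuousOn (sinWronskian ψ ψ' μ p) s := by
  unfold sinWronskian
  fun_prop

variable {c m e : ℝ}

theorem sturm_ne_zero_of_pos (hμ : 0 < μ) (hce : μ * (e - c) ≤ π) (hcm : c < m) (hme : m < e)
    (hψ : ContinuousOn ψ (Icc c e)) (hψ' : ContinuousOn ψ' (Icc c e))
    (hd : ∀ t ∈ Ioo c e, HasDerivAt ψ (ψ' t) t) (hd' : ∀ t ∈ Ioo c e, HasDerivAt ψ' (ψ'' t) t)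
    (hpos : ∀ t ∈ Ioo c e, 0 < ψ'' t + μ ^ 2 * ψ t) (hc : ψ c = 0) (he : ψ e = 0) :
    ψ m ≠ 0 := by
  intro hm
  have hW (p t : ℝ) (ht : t ∈ Ioo c e) :=
    hasDerivAt_sinWronskian (μ := μ) (p := p) (hd t ht) (hd' t ht)
  have hleft : 0 < ψ' m := by
    have hsub : Icc c m ⊆ Icc c e := Icc_subset_Icc_right hme.le
    have hmono : StrictMonoOn (sinWronskian ψ ψ' μ c) (Icc c m) := by
      refine strictMonoOn_of_deriv_pos (convex_Icc c m)
        (continuousOn_sinWronskian c (hψ.mono hsub) (hψ'.mono hsub)) fun t ht => ?_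
      rw [interior_Icc] at ht
      have ht' : t ∈ Ioo c e := ⟨ht.1, ht.2.trans hme⟩
      rw [(hW c t ht').deriv]
      exact mul_pos (hpos t ht')
        (sin_pos_of_pos_of_lt_pi (by nlinarith [ht.1]) (by nlinarith [ht'.2]))
    have := hmono (left_mem_Icc.mpr hcm.le) (right_mem_Icc.mpr hcm.le) hcm
    simp only [sinWronskian, hc, hm, sub_self, mul_zero, sin_zero] at this
    have hsin : 0 < sin (μ * (m - c)) := sin_pos_of_pos_of_lt_pi (by nlinarith) (by nlinarith)
    nlinarith
  have hright : ψ' m < 0 := by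
    have hsub : Icc m e ⊆ Icc c e := Icc_subset_Icc_left hcm.le
    have hanti : StrictAntiOn (sinWronskian ψ ψ' μ e) (Icc m e) := by
      refine strictAntiOn_of_deriv_neg (convex_Icc m e)
        (continuousOn_sinWronskian e (hψ.mono hsub) (hψ'.mono hsub)) fun t ht => ?_
      rw [interior_Icc] at ht
      have ht' : t ∈ Ioo c e := ⟨hcm.trans ht.1, ht.2⟩
      rw [(hW e t ht').deriv]
      exact mul_neg_of_pos_of_neg (hpos t ht')
        (sin_neg_of_neg_of_neg_pi_lt (by nlinarith [ht.2]) (by nlinarith [ht'.1]))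
    have := hanti (left_mem_Icc.mpr hme.le) (right_mem_Icc.mpr hme.le) hme
    simp only [sinWronskian, he, hm, sub_self, mul_zero, sin_zero] at this
    have hsin : sin (μ * (m - e)) < 0 := sin_neg_of_neg_of_neg_pi_lt (by nlinarith) (by nlinarith)
    nlinarith
  exact lt_asymm hleft hright

theorem exists_sturm_eq_zero (hμ : 0 < μ) (hce : μ * (e - c) ≤ π) (hcm : c < m) (hme : m < e)
    (hψ : ContinuousOn ψ (Icc c e)) (hψ' : ContinuousOn ψ' (Icc c e))
    (hd : ∀ t ∈ Ioo c e, HasDerivAt ψ (ψ' t) t) (hd' : ∀ t ∈ Ioo c e, HasDerivAt ψ' (ψ'' t) t)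
    (hc : ψ c = 0) (hm : ψ m = 0) (he : ψ e = 0) :
    ∃ s ∈ Ioo c e, ψ'' s + μ ^ 2 * ψ s = 0 := by
  by_contra! hne
  have hsin (t : ℝ) (ht : t ∈ Ioo c e) : 0 < sin (μ * (t - c)) :=
    sin_pos_of_pos_of_lt_pi (by nlinarith [ht.1]) (by nlinarith [ht.2])
  rcases hasDerivWithinAt_forall_lt_or_forall_gt_of_forall_ne (convex_Ioo c e)
      (fun t ht => (hasDerivAt_sinWronskian (p := c) (hd t ht) (hd' t ht)).hasDerivWithinAt)
      (fun t ht => mul_ne_zero (hne t ht) (hsin t ht).ne') with hneg | hpos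
  · refine sturm_ne_zero_of_pos (ψ := -ψ) (ψ' := -ψ') (ψ'' := -ψ'') hμ hce hcm hme hψ.neg hψ'.neg
      (fun t ht => (hd t ht).neg) (fun t ht => (hd' t ht).neg) (fun t ht => ?_)
      (by simp [hc]) (by simp [he]) (by simp [hm])
    simp only [Pi.neg_apply]
    nlinarith [hneg t ht, hsin t ht]
  · exact sturm_ne_zero_of_pos hμ hce hcm hme hψ hψ' hd hd'
      (fun t ht => by nlinarith [hpos t ht, hsin t ht]) hc he hm

end Sturm

theorem HasDerivAt.exp_neg_mul_mul {f : ℝ → ℝ} {f' lam t : ℝ} (hf : HasDerivAt f f' t) :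
    HasDerivAt (fun x => Real.exp (-(lam * x)) * f x)
      (Real.exp (-(lam * t)) * (f' - lam * f t)) t := by
  have hexp : HasDerivAt (fun x => Real.exp (-(lam * x))) (Real.exp (-(lam * t)) * -lam) t := by
    simpa using (((hasDerivAt_id t).const_mul lam).neg).exp
  exact (hexp.mul hf).congr_deriv (by ring)

section Damped

variable {φ φ' φ'' : ℝ → ℝ} {lam x y w : ℝ}

theorem exists_sub_mul_eq_zero_of_zeros (hxy : x < y) (hφ : ContinuousOn φ (Icc x y))
    (hd : ∀ t ∈ Ioo x y, HasDerivAt φ (φ' t) t) (hx : φ x = 0) (hy : φ y = 0) :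
    ∃ s ∈ Ioo x y, φ' s - lam * φ s = 0 := by
  obtain ⟨s, hs, h⟩ := exists_hasDerivAt_eq_zero hxy
    ((by fun_prop : Continuous fun t => exp (-(lam * t))).continuousOn.mul hφ)
    (by simp [hx, hy]) fun t ht => (hd t ht).exp_neg_mul_mul
  exact ⟨s, hs, (mul_eq_zero.mp h).resolve_left (exp_ne_zero _)⟩

theorem exists_damped_eq_zero_of_zeros {μ : ℝ} (hμ : 0 < μ) (hxw : μ * (w - x) ≤ π) (hxy : x < y)
    (hyw : y < w) (hφ : ContinuousOn φ (Icc x w)) (hφ' : ContinuousOn φ' (Icc x w))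
    (hd : ∀ t ∈ Ioo x w, HasDerivAt φ (φ' t) t) (hd' : ∀ t ∈ Ioo x w, HasDerivAt φ' (φ'' t) t)
    (hx : φ x = 0) (hy : φ y = 0) (hw : φ w = 0) :
    ∃ s ∈ Ioo x w, φ'' s - 2 * lam * φ' s + (lam ^ 2 + μ ^ 2) * φ s = 0 := by
  have hexp : Continuous fun t => exp (-(lam * t)) := by fun_prop
  obtain ⟨s, hs, h⟩ := exists_sturm_eq_zero (ψ := fun t => exp (-(lam * t)) * φ t)
    (ψ' := fun t => exp (-(lam * t)) * (φ' t - lam * φ t))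
    (ψ'' := fun t => exp (-(lam * t)) * (φ'' t - 2 * lam * φ' t + lam ^ 2 * φ t))
    hμ hxw hxy hyw (hexp.continuousOn.mul hφ)
    (hexp.continuousOn.mul (hφ'.sub (continuousOn_const.mul hφ)))
    (fun t ht => (hd t ht).exp_neg_mul_mul)
    (fun t ht => (((hd' t ht).sub ((hd t ht).const_mul lam)).exp_neg_mul_mul).congr_deriv
      (by rw [Pi.sub_apply]; ring))
    (by simp [hx]) (by simp [hy]) (by simp [hw])
  refine ⟨s, hs, (mul_eq_zero.mp ?_).resolve_left (exp_ne_zero (-(lam * s)))⟩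
  linear_combination h

theorem exists_sub_mul_eq_zero_between_zeros {a b : ℝ} (hφ : ContinuousOn φ (Icc a b))
    (hd : ∀ t ∈ Ioo a b, HasDerivAt φ (φ' t) t) {t : Fin 2 → ℝ} (ht : StrictMono t)
    (hzero : ∀ i, t i ∈ {s ∈ Icc a b | φ s = 0}) :
    ∃ s ∈ Ioo (t 0) (t (Fin.last 1)), φ' s - lam * φ s = 0 :=
  exists_sub_mul_eq_zero_of_zeros (ht (by decide))
    (hφ.mono (Icc_subset_Icc (hzero 0).1.1 (hzero 1).1.2))
    (fun s hs => hd s (Ioo_subset_Ioo (hzero 0).1.1 (hzero 1).1.2 hs)) (hzero 0).2 (hzero 1).2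

theorem exists_damped_eq_zero_between_zeros {μ a b : ℝ} (hμ : 0 < μ) (hab : μ * (b - a) ≤ π)
    (hφ : ContinuousOn φ (Icc a b)) (hφ' : ContinuousOn φ' (Icc a b))
    (hd : ∀ t ∈ Ioo a b, HasDerivAt φ (φ' t) t) (hd' : ∀ t ∈ Ioo a b, HasDerivAt φ' (φ'' t) t)
    {t : Fin 3 → ℝ} (ht : StrictMono t) (hzero : ∀ i, t i ∈ {s ∈ Icc a b | φ s = 0}) :
    ∃ s ∈ Ioo (t 0) (t (Fin.last 2)),
      φ'' s - 2 * lam * φ' s + (lam ^ 2 + μ ^ 2) * φ s = 0 := by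
  have hsub : Icc (t 0) (t 2) ⊆ Icc a b := Icc_subset_Icc (hzero 0).1.1 (hzero 2).1.2
  have hosub : Ioo (t 0) (t 2) ⊆ Ioo a b := Ioo_subset_Ioo (hzero 0).1.1 (hzero 2).1.2
  have hlen : μ * (t 2 - t 0) ≤ π :=
    (mul_le_mul_of_nonneg_left (by linarith [(hzero 0).1.1, (hzero 2).1.2]) hμ.le).trans hab
  exact exists_damped_eq_zero_of_zeros hμ hlen
    (ht (by decide : (0 : Fin 3) < 1)) (ht (by decide : (1 : Fin 3) < 2))
    (hφ.mono hsub) (hφ'.mono hsub) (fun s hs => hd s (hosub hs)) (fun s hs => hd' s (hosub hs))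
    (hzero 0).2 (hzero 1).2 (hzero 2).2

end Damped

theorem Set.finite_ncard_le_of_forall_exists_zero_mem_Ioo {α M : Type*} [LinearOrder α] [Zero M]
    {S : Set α} {F : α → M} {a b : α} {m : ℕ} (hS : S ⊆ Icc a b)
    (hsep : ∀ t : Fin (m + 1) → α, StrictMono t → (∀ i, t i ∈ S) →
      ∃ z ∈ Ioo (t 0) (t (Fin.last m)), F z = 0) :
    ((∀ t ∈ Ioo a b, F t ≠ 0) → S.Finite ∧ S.ncard ≤ m) ∧
    ∀ k : ℕ, {t ∈ Icc a b | F t = 0}.Finite → {t ∈ Icc a b | F t = 0}.ncard ≤ k →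
      S.Finite ∧ S.ncard ≤ m * (k + 1) := by
  have hsep' (t : Fin (m + 1) → α) (ht : StrictMono t) (htS : ∀ i, t i ∈ S) :
      ∃ z ∈ {s ∈ Ioo a b | F s = 0}, z ∈ Ioo (t 0) (t (Fin.last m)) := by
    obtain ⟨z, hz, hFz⟩ := hsep t ht htS
    exact ⟨z, ⟨⟨(hS (htS 0)).1.trans_lt hz.1, hz.2.trans_le (hS (htS _)).2⟩, hFz⟩, hz⟩
  simp only [← encard_le_coe_iff_finite_ncard_le]
  refine ⟨fun h => ?_, fun k hfin hk => ?_⟩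
  · have hZ : {s ∈ Ioo a b | F s = 0}.encard ≤ (0 : ℕ) := by
      simpa using eq_empty_of_forall_notMem fun s hs => h s hs.1 hs.2
    simpa using encard_le_mul_of_forall_exists_mem_Ioo hZ hsep'
  · refine encard_le_mul_of_forall_exists_mem_Ioo ((encard_le_encard ?_).trans
      (encard_le_coe_iff_finite_ncard_le.mpr ⟨hfin, hk⟩)) hsep'
    exact fun s hs => ⟨Ioo_subset_Icc_self hs.1, hs.2⟩

namespace OUMult

theorem zeros_of_damped_oscillation_general
    (lam mu a b : ℝ) (hmu : 0 < mu) (hlen : b - a < 1 / mu)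
    (φ φ' φ'' : ℝ → ℝ)
    (hd1 : ∀ t ∈ Set.Icc a b, HasDerivWithinAt φ (φ' t) (Set.Icc a b) t)
    (hd2 : ∀ t ∈ Set.Icc a b, HasDerivWithinAt φ' (φ'' t) (Set.Icc a b) t) :
    ((∀ t ∈ Set.Ioo a b, φ'' t - 2 * lam * φ' t + (lam ^ 2 + mu ^ 2) * φ t ≠ 0) →
      {t ∈ Set.Icc a b | φ t = 0}.Finite ∧ {t ∈ Set.Icc a b | φ t = 0}.ncard ≤ 2) ∧
    (∀ k : ℕ,
      {t ∈ Set.Icc a b | φ'' t - 2 * lam * φ' t + (lam ^ 2 + mu ^ 2) * φ t = 0}.Finite →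
      {t ∈ Set.Icc a b | φ'' t - 2 * lam * φ' t + (lam ^ 2 + mu ^ 2) * φ t = 0}.ncard ≤ k →
      {t ∈ Set.Icc a b | φ t = 0}.Finite ∧ {t ∈ Set.Icc a b | φ t = 0}.ncard ≤ 2 * k + 2) ∧
    ((∀ t ∈ Set.Ioo a b, φ' t - lam * φ t ≠ 0) →
      {t ∈ Set.Icc a b | φ t = 0}.Finite ∧ {t ∈ Set.Icc a b | φ t = 0}.ncard ≤ 2) ∧
    (∀ k : ℕ,
      {t ∈ Set.Icc a b | φ' t - lam * φ t = 0}.Finite →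
      {t ∈ Set.Icc a b | φ' t - lam * φ t = 0}.ncard ≤ k →
      {t ∈ Set.Icc a b | φ t = 0}.Finite ∧ {t ∈ Set.Icc a b | φ t = 0}.ncard ≤ 2 * k + 2) := by
  have hφ : ContinuousOn φ (Icc a b) := fun t ht => (hd1 t ht).continuousWithinAt
  have hφ' : ContinuousOn φ' (Icc a b) := fun t ht => (hd2 t ht).continuousWithinAt
  have hd1' (t : ℝ) (ht : t ∈ Ioo a b) : HasDerivAt φ (φ' t) t :=
    (hd1 t (Ioo_subset_Icc_self ht)).hasDerivAt (Icc_mem_nhds ht.1 ht.2)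
  have hd2' (t : ℝ) (ht : t ∈ Ioo a b) : HasDerivAt φ' (φ'' t) t :=
    (hd2 t (Ioo_subset_Icc_self ht)).hasDerivAt (Icc_mem_nhds ht.1 ht.2)
  have hshort : mu * (b - a) ≤ π :=
    ((lt_div_iff₀' hmu).mp hlen).le.trans (by linarith [pi_gt_three])
  obtain ⟨hS₀, hSk⟩ := finite_ncard_le_of_forall_exists_zero_mem_Ioo (sep_subset _ _)
    fun t ht hzero => exists_damped_eq_zero_between_zeros hmu hshort hφ hφ' hd1' hd2' ht hzero
  obtain ⟨hT₀, hTk⟩ := finite_ncard_le_of_forall_exists_zero_mem_Ioo (sep_subset _ _)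
    fun t ht hzero => exists_sub_mul_eq_zero_between_zeros hφ hd1' ht hzero
  refine ⟨hS₀, fun k hfin hk => ?_, fun h => ?_, fun k hfin hk => ?_⟩
  · exact mul_add_one 2 k ▸ hSk k hfin hk
  · exact (hT₀ h).imp_right (·.trans (by norm_num))
  · exact (hTk k hfin hk).imp_right (·.trans (by omega))

/-- Claim on zeros of solutions relative to `S_{λ,μ}` and `T_λ`.
Let `λ ∈ ℝ`, `μ > 0` and let `J = [a,b]` be a closed interval of length `< 1/μ`.
Let `φ ∈ C²(J)` be real-valued; set `S_{λ,μ}φ = φ'' - 2λφ' + (λ² + μ²)φ` and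
`T_λφ = φ' - λφ`. If `S_{λ,μ}φ` does not vanish in the interior of `J`, then `φ` has
at most two zeros in `J`; if `S_{λ,μ}φ` has at most `k` zeros in `J`, then `φ` has at
most `2k + 2` zeros in `J`. The same statements hold with `S_{λ,μ}φ` replaced by
`T_λφ`. -/
theorem zeros_of_damped_oscillation
    (lam mu a b : ℝ) (hmu : 0 < mu) (hab : a ≤ b) (hlen : b - a < 1 / mu)
    (φ φ' φ'' : ℝ → ℝ)
    (hd1 : ∀ t ∈ Set.Icc a b, HasDerivWithinAt φ (φ' t) (Set.Icc a b) t)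
    (hd2 : ∀ t ∈ Set.Icc a b, HasDerivWithinAt φ' (φ'' t) (Set.Icc a b) t)
    (hc2 : ContinuousOn φ'' (Set.Icc a b)) :
    ((∀ t ∈ Set.Ioo a b, φ'' t - 2 * lam * φ' t + (lam ^ 2 + mu ^ 2) * φ t ≠ 0) →
      {t ∈ Set.Icc a b | φ t = 0}.Finite ∧ {t ∈ Set.Icc a b | φ t = 0}.ncard ≤ 2) ∧
    (∀ k : ℕ,
      {t ∈ Set.Icc a b | φ'' t - 2 * lam * φ' t + (lam ^ 2 + mu ^ 2) * φ t = 0}.Finite →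
      {t ∈ Set.Icc a b | φ'' t - 2 * lam * φ' t + (lam ^ 2 + mu ^ 2) * φ t = 0}.ncard ≤ k →
      {t ∈ Set.Icc a b | φ t = 0}.Finite ∧ {t ∈ Set.Icc a b | φ t = 0}.ncard ≤ 2 * k + 2) ∧
    ((∀ t ∈ Set.Ioo a b, φ' t - lam * φ t ≠ 0) →
      {t ∈ Set.Icc a b | φ t = 0}.Finite ∧ {t ∈ Set.Icc a b | φ t = 0}.ncard ≤ 2) ∧
    (∀ k : ℕ,
      {t ∈ Set.Icc a b | φ' t - lam * φ t = 0}.Finite →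
      {t ∈ Set.Icc a b | φ' t - lam * φ t = 0}.ncard ≤ k →
      {t ∈ Set.Icc a b | φ t = 0}.Finite ∧ {t ∈ Set.Icc a b | φ t = 0}.ncard ≤ 2 * k + 2) :=
  zeros_of_damped_oscillation_general lam mu a b hmu hlen φ φ' φ'' hd1 hd2

end OUMult
end
end
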